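/- Let M ∈ M_N(ℂ), let a, a_n ∈ W(M) with a_n → a, and let B(c) = {b : diag(c,b) is a compression of M}. Assume all B(a_n) are nonempty. Then for every ε > 0, eventually every b ∈ B(a_n) is within distance ε of the set B(a); i.e., the one-sided Hausdorff distance sup_{b ∈ B(a_n)} dist(b, B(a)) tends to 0. -/

import Mathlib

open Matrix BigOperators Finset

noncomputable section

/-- Numerical range of a complex matrix. -/
def NumRange {n : ℕ} (M : Matrix (Fin n) (Fin n) ℂ) : Set ℂ :=
  { c | ∃ u : Fin n → ℂ, star u ⬝ᵥ u = 1 ∧ star u ⬝ᵥ M.mulVec u = c }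

/-- `C` is a rank-`k` compression of `M`: `C` represents `P_S M |_S` in some
orthonormal basis of a `k`-dimensional subspace `S`. -/
def IsCompression {N k : ℕ} (M : Matrix (Fin N) (Fin N) ℂ)
    (C : Matrix (Fin k) (Fin k) ℂ) : Prop :=
  ∃ f : Fin k → (Fin N → ℂ),
    (∀ i j, star (f i) ⬝ᵥ f j = if i = j then 1 else 0) ∧
    (∀ i j, C i j = star (f i) ⬝ᵥ M.mulVec (f j))

/-- `diag(a,b)` is a compression of `M`. -/
def IsDiagCompression {N : ℕ} (M : Matrix (Fin N) (Fin N) ℂ) (a b : ℂ) : Prop :=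
  ∃ u w : Fin N → ℂ,
    star u ⬝ᵥ u = 1 ∧ star w ⬝ᵥ w = 1 ∧ star u ⬝ᵥ w = 0 ∧
    star u ⬝ᵥ M.mulVec u = a ∧ star w ⬝ᵥ M.mulVec w = b ∧
    star u ⬝ᵥ M.mulVec w = 0 ∧ star w ⬝ᵥ M.mulVec u = 0

/-- The rank-`k` numerical range `Λ_k(M)`. -/
def rankNumRange {N : ℕ} (k : ℕ) (M : Matrix (Fin N) (Fin N) ℂ) : Set ℂ :=
  { c | ∃ P : Matrix (Fin N) (Fin N) ℂ,
      P.IsHermitian ∧ P * P = P ∧ P.rank = k ∧ P * M * P = c • P }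

/-- `M` has an orthonormal basis of eigenvectors with eigenvalue list `z`. -/
def HasONEigenbasis {N : ℕ} (M : Matrix (Fin N) (Fin N) ℂ) (z : Fin N → ℂ) : Prop :=
  ∃ f : Fin N → (Fin N → ℂ),
    (∀ i j, star (f i) ⬝ᵥ f j = if i = j then 1 else 0) ∧
    (∀ j, M.mulVec (f j) = z j • f j)

/-- 2D cross product of complex numbers viewed as plane vectors. -/
def cross2 (p q : ℂ) : ℝ := p.re * q.im - p.im * q.re

/-!
The pairs `(c, b)` with `diag(c, b)` a compression of `M` are the continuous image of a compact
set of orthonormal pairs `(u, w)`, so they form a compact subset of `ℂ × ℂ`. A set-valued map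
with compact graph is upper semicontinuous at `a`: the points of the graph that are `ε`-far from
the fibre over `a` form a compact set, whose projection is closed and misses `a`.
-/

theorem eventually_forall_infDist_fiber_lt {X Y : Type*} [TopologicalSpace X] [T2Space X]
    [PseudoMetricSpace Y] {K : Set (X × Y)} (hK : IsCompact K) (x : X)
    {ε : ℝ} (hε : 0 < ε) :
    ∀ᶠ x' in nhds x, ∀ y, (x', y) ∈ K → Metric.infDist y {y' | (x, y') ∈ K} < ε := by
  set far : Set (X × Y) := K ∩ {p | ε ≤ Metric.infDist p.2 {y' | (x, y') ∈ K}}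
  have hfar : IsCompact far :=
    hK.inter_right <|
      isClosed_le continuous_const ((Metric.continuous_infDist_pt _).comp continuous_snd)
  have hx : x ∉ Prod.fst '' far := by
    rintro ⟨⟨x, y⟩, ⟨hyK, hyfar⟩, rfl⟩
    have hzero : Metric.infDist y {y' | (x, y') ∈ K} = 0 := Metric.infDist_zero_of_mem hyK
    exact (hzero ▸ hyfar.out).not_gt hε
  filter_upwards [(hfar.image continuous_fst).isClosed.isOpen_compl.mem_nhds hx] with x' hx' y hy
  by_contra! hy_far
  exact hx' ⟨(x', y), ⟨hy, hy_far⟩, rfl⟩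

theorem isCompact_setOf_star_dotProduct_self_eq_one {𝕜 ι : Type*} [RCLike 𝕜] [Fintype ι] :
    IsCompact {u : ι → 𝕜 | star u ⬝ᵥ u = 1} := by
  have hsphere : {u : ι → 𝕜 | star u ⬝ᵥ u = 1} =
      WithLp.ofLp '' Metric.sphere (0 : EuclideanSpace 𝕜 ι) 1 := by
    ext u
    have hnorm : star u ⬝ᵥ u = ((‖WithLp.toLp 2 u‖ ^ 2 : ℝ) : 𝕜) := by
      rw [RCLike.ofReal_pow, ← inner_self_eq_norm_sq_to_K, EuclideanSpace.inner_toLp_toLp,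
        dotProduct_comm]
    rw [Set.mem_ofPred_eq, hnorm, ← RCLike.ofReal_one, RCLike.ofReal_inj,
      pow_eq_one_iff_of_nonneg (norm_nonneg _) two_ne_zero]
    exact ⟨fun h => ⟨_, by simpa using h, rfl⟩, by rintro ⟨x, hx, rfl⟩; simpa using hx⟩
  rw [hsphere]
  exact (isCompact_sphere 0 1).image (PiLp.continuous_ofLp 2 _)

theorem isCompact_setOf_isDiagCompression {N : ℕ} (M : Matrix (Fin N) (Fin N) ℂ) :
    IsCompact {p : ℂ × ℂ | IsDiagCompression M p.1 p.2} := by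
  set pairs : Set ((Fin N → ℂ) × (Fin N → ℂ)) := {q |
    star q.1 ⬝ᵥ q.1 = 1 ∧ star q.2 ⬝ᵥ q.2 = 1 ∧ star q.1 ⬝ᵥ q.2 = 0 ∧
    star q.1 ⬝ᵥ M *ᵥ q.2 = 0 ∧ star q.2 ⬝ᵥ M *ᵥ q.1 = 0}
  have hclosed : IsClosed pairs := by
    simp only [pairs, Set.ofPred_and]
    apply_rules [IsClosed.inter, isClosed_eq] <;> fun_prop
  have hpairs : IsCompact pairs :=
    (isCompact_setOf_star_dotProduct_self_eq_one.prod
      isCompact_setOf_star_dotProduct_self_eq_one).of_isClosed_subset hclosed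
      fun q hq => ⟨hq.1, hq.2.1⟩
  have hgraph : {p : ℂ × ℂ | IsDiagCompression M p.1 p.2} =
      (fun q => (star q.1 ⬝ᵥ M *ᵥ q.1, star q.2 ⬝ᵥ M *ᵥ q.2)) '' pairs := by
    ext ⟨c, b⟩
    constructor
    · rintro ⟨u, w, hu, hw, huw, rfl, rfl, hMuw, hMwu⟩
      exact ⟨(u, w), ⟨hu, hw, huw, hMuw, hMwu⟩, rfl⟩
    · rintro ⟨⟨u, w⟩, ⟨hu, hw, huw, hMuw, hMwu⟩, hcb⟩
      obtain ⟨rfl, rfl⟩ := Prod.mk.inj hcb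
      exact ⟨u, w, hu, hw, huw, rfl, rfl, hMuw, hMwu⟩
  rw [hgraph]
  exact hpairs.image (by fun_prop)

theorem stmt_15_general {N : ℕ} (M : Matrix (Fin N) (Fin N) ℂ)
    (a : ℂ) (aseq : ℕ → ℂ)
    (hlim : Filter.Tendsto aseq Filter.atTop (nhds a)) :
    ∀ ε > (0 : ℝ), ∀ᶠ n in Filter.atTop,
      ∀ b ∈ {b : ℂ | IsDiagCompression M (aseq n) b},
        Metric.infDist b {b' : ℂ | IsDiagCompression M a b'} < ε := by
  intro ε hε
  filter_upwards [hlim.eventually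
    (eventually_forall_infDist_fiber_lt (isCompact_setOf_isDiagCompression M) a hε)]
    with n hn b hb using hn b hb

theorem stmt_15 {N : ℕ} (M : Matrix (Fin N) (Fin N) ℂ)
    (a : ℂ) (ha : a ∈ NumRange M)
    (aseq : ℕ → ℂ) (haseq : ∀ n, aseq n ∈ NumRange M)
    (hlim : Filter.Tendsto aseq Filter.atTop (nhds a))
    (hne : ∀ n, {b : ℂ | IsDiagCompression M (aseq n) b}.Nonempty) :
    ∀ ε > (0 : ℝ), ∀ᶠ n in Filter.atTop,
      ∀ b ∈ {b : ℂ | IsDiagCompression M (aseq n) b},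
        Metric.infDist b {b' : ℂ | IsDiagCompression M a b'} < ε :=
  stmt_15_general M a aseq hlim
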